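/- For every g ∈ C²[a,b] and every x ∈ [a,b], |(1/2)[(x-a)g(a) + (b-a)g(x) + (b-x)g(b)] - ∫_a^b g(t) dt| ≤ (((x-a)³+(b-x)³)/12) ‖g''‖_∞. -/

import Mathlib

open Set intervalIntegral

noncomputable def supOn (a b : ℝ) (f : ℝ → ℝ) : ℝ := ⨆ x : Set.Icc a b, |f x|

def IsC2On (a b : ℝ) (g g' g'' : ℝ → ℝ) : Prop :=
  (∀ x ∈ Set.Icc a b, HasDerivWithinAt g (g' x) (Set.Icc a b) x) ∧
  (∀ x ∈ Set.Icc a b, HasDerivWithinAt g' (g'' x) (Set.Icc a b) x) ∧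
  ContinuousOn g'' (Set.Icc a b)

noncomputable def KF (a b t : ℝ) (f : ℝ → ℝ) : ℝ :=
  sInf {v : ℝ | ∃ g g' g'', IsC2On a b g g' g'' ∧
    v = supOn a b (fun x => f x - g x) + t * supOn a b g''}

noncomputable def bullen (a b : ℝ) (f : ℝ → ℝ) : ℝ :=
  (f a + f b) / 2 + f ((a + b) / 2) - (2 / (b - a)) * ∫ x in a..b, f x

noncomputable def bullenC (a b : ℝ) (n : ℕ) (x : ℕ → ℝ) (f : ℝ → ℝ) : ℝ :=
  (1 / (b - a)) * ∑ i ∈ Finset.range n, (x (i+1) - x i) *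
    ((f (x i) + f (x (i+1))) / 2 + f ((x i + x (i+1)) / 2)
      - (2 / (x (i+1) - x i)) * ∫ t in (x i)..(x (i+1)), f t)

noncomputable def omega1 (a b : ℝ) (f : ℝ → ℝ) (h : ℝ) : ℝ :=
  sSup {v : ℝ | ∃ x ∈ Set.Icc a b, ∃ y ∈ Set.Icc a b, |x - y| ≤ h ∧ v = |f x - f y|}

noncomputable def omega2 (a b : ℝ) (f : ℝ → ℝ) (h : ℝ) : ℝ :=
  sSup {v : ℝ | ∃ x t : ℝ, 0 ≤ t ∧ t ≤ h ∧ x - t ∈ Set.Icc a b ∧ x + t ∈ Set.Icc a b ∧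
    v = |f (x + t) - 2 * f x + f (x - t)|}

/-! The trapezoid error on `[u, v]` is `∫ (t - u)(v - t)/2 · g''(t) dt`, whose kernel integrates
to `(v - u)³/12`. Splitting `[a, b]` at `x` and applying this on both pieces gives the bound. -/

lemma abs_le_supOn {a b : ℝ} {f : ℝ → ℝ} (hf : ContinuousOn f (Icc a b)) {t : ℝ}
    (ht : t ∈ Icc a b) : |f t| ≤ supOn a b f := by
  have hbdd : BddAbove (range fun s : Icc a b => |f s|) := by
    simpa only [image_eq_range] using (isCompact_Icc.image_of_continuousOn hf.abs).bddAbove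
  exact le_ciSup hbdd ⟨t, ht⟩

lemma integral_peano_kernel (u v : ℝ) :
    ∫ t in u..v, (t - u) * (v - t) / 2 = (v - u) ^ 3 / 12 := by
  have hQ : ∀ t : ℝ, HasDerivAt (fun t => ((t - u) ^ 2 * (v - u) / 2 - (t - u) ^ 3 / 3) / 2)
      ((t - u) * (v - t) / 2) t := by
    intro t
    have h1 : HasDerivAt (fun t : ℝ => t - u) 1 t := (hasDerivAt_id t).sub_const u
    exact ((((h1.pow 2).mul_const (v - u)).div_const 2).sub ((h1.pow 3).div_const 3)).div_const 2
      |>.congr_deriv (by ring)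
  rw [integral_eq_sub_of_hasDerivAt (fun t _ => hQ t)
    ((by fun_prop : Continuous _).intervalIntegrable u v)]
  ring

lemma abs_integral_peano_kernel_mul_le {u v M : ℝ} {f : ℝ → ℝ} (huv : u ≤ v)
    (hf : ∀ t ∈ Icc u v, |f t| ≤ M) :
    |∫ t in u..v, (t - u) * (v - t) / 2 * f t| ≤ (v - u) ^ 3 / 12 * M := by
  have hbound_int : IntervalIntegrable (fun t => (t - u) * (v - t) / 2 * M)
      MeasureTheory.volume u v := by
    apply Continuous.intervalIntegrable; fun_prop
  calc |∫ t in u..v, (t - u) * (v - t) / 2 * f t|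
      ≤ ∫ t in u..v, (t - u) * (v - t) / 2 * M := by
        rw [← Real.norm_eq_abs]
        refine norm_integral_le_of_norm_le huv (.of_forall fun t ht => ?_) hbound_int
        have hkernel : 0 ≤ (t - u) * (v - t) / 2 :=
          div_nonneg (mul_nonneg (by linarith [ht.1]) (by linarith [ht.2])) zero_le_two
        rw [Real.norm_eq_abs, abs_mul, abs_of_nonneg hkernel]
        exact mul_le_mul_of_nonneg_left (hf t (Ioc_subset_Icc_self ht)) hkernel
    _ = (v - u) ^ 3 / 12 * M := by rw [integral_mul_const, integral_peano_kernel]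

namespace IsC2On

variable {a b : ℝ} {g g' g'' : ℝ → ℝ}

lemma mono (hg : IsC2On a b g g' g'') {u v : ℝ} (hu : a ≤ u) (hv : v ≤ b) :
    IsC2On u v g g' g'' := by
  have hsub : Icc u v ⊆ Icc a b := Icc_subset_Icc hu hv
  exact ⟨fun t ht => (hg.1 t (hsub ht)).mono hsub, fun t ht => (hg.2.1 t (hsub ht)).mono hsub,
    hg.2.2.mono hsub⟩

lemma continuousOn (hg : IsC2On a b g g' g'') : ContinuousOn g (Icc a b) :=
  fun t ht => (hg.1 t ht).continuousWithinAt

lemma continuousOn_deriv (hg : IsC2On a b g g' g'') : ContinuousOn g' (Icc a b) :=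
  fun t ht => (hg.2.1 t ht).continuousWithinAt

lemma intervalIntegrable (hg : IsC2On a b g g' g'') (hab : a ≤ b) :
    IntervalIntegrable g MeasureTheory.volume a b :=
  hg.continuousOn.intervalIntegrable_of_Icc hab

lemma trapezoid_error_eq {u v : ℝ} (huv : u ≤ v) (hg : IsC2On u v g g' g'') :
    (v - u) * (g u + g v) / 2 - ∫ t in u..v, g t = ∫ t in u..v, (t - u) * (v - t) / 2 * g'' t := by
  -- an antiderivative of `(t - u)(v - t)/2 · g'' t + g t`, found by integrating by parts twice
  set F : ℝ → ℝ := fun t => (t - u) * (v - t) / 2 * g' t - (u + v - 2 * t) / 2 * g t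
  have hF_cont : ContinuousOn F (Icc u v) := by
    have := hg.continuousOn; have := hg.continuousOn_deriv; fun_prop
  have hF_deriv : ∀ t ∈ Ioo u v, HasDerivAt F ((t - u) * (v - t) / 2 * g'' t + g t) t := by
    intro t ht
    have hnhds : Icc u v ∈ nhds t := Icc_mem_nhds ht.1 ht.2
    have hg₁ := (hg.1 t (mem_of_mem_nhds hnhds)).hasDerivAt hnhds
    have hg₂ := (hg.2.1 t (mem_of_mem_nhds hnhds)).hasDerivAt hnhds
    have hp : HasDerivAt (fun t => (t - u) * (v - t) / 2) ((v - t + (u - t)) / 2) t := by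
      simpa using (((hasDerivAt_id t).sub_const u).mul ((hasDerivAt_id t).const_sub v)).div_const 2
    have hq : HasDerivAt (fun t => (u + v - 2 * t) / 2) (-1) t := by
      simpa using (((hasDerivAt_id t).const_mul 2).const_sub (u + v)).div_const 2
    exact ((hp.mul hg₂).sub (hq.mul hg₁)).congr_deriv (by ring)
  have hkernel_int : IntervalIntegrable (fun t => (t - u) * (v - t) / 2 * g'' t)
      MeasureTheory.volume u v := by
    have := hg.2.2; exact ContinuousOn.intervalIntegrable_of_Icc huv (by fun_prop)
  have hFTC := integral_eq_sub_of_hasDerivAt_of_le huv hF_cont hF_deriv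
    (hkernel_int.add (hg.intervalIntegrable huv))
  rw [integral_add hkernel_int (hg.intervalIntegrable huv)] at hFTC
  simp only [F] at hFTC
  linarith

lemma abs_trapezoid_error_le {u v M : ℝ} (huv : u ≤ v)
    (hg : IsC2On u v g g' g'') (hM : ∀ t ∈ Icc u v, |g'' t| ≤ M) :
    |(v - u) * (g u + g v) / 2 - ∫ t in u..v, g t| ≤ (v - u) ^ 3 / 12 * M := by
  rw [hg.trapezoid_error_eq huv]
  exact abs_integral_peano_kernel_mul_le huv hM

end IsC2On

theorem stmt12_general (a b : ℝ) (g g' g'' : ℝ → ℝ)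
    (hg : IsC2On a b g g' g'') (x : ℝ) (hx : x ∈ Set.Icc a b) :
    |(1 / 2) * ((x - a) * g a + (b - a) * g x + (b - x) * g b) - ∫ t in a..b, g t| ≤
      (((x - a) ^ 3 + (b - x) ^ 3) / 12) * supOn a b g'' := by
  obtain ⟨hax, hxb⟩ := hx
  have hM : ∀ t ∈ Icc a b, |g'' t| ≤ supOn a b g'' := fun t ht => abs_le_supOn hg.2.2 ht
  have hleft := (hg.mono le_rfl hxb).abs_trapezoid_error_le hax
    fun t ht => hM t ⟨ht.1, ht.2.trans hxb⟩
  have hright := (hg.mono hax le_rfl).abs_trapezoid_error_le hxb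
    fun t ht => hM t ⟨hax.trans ht.1, ht.2⟩
  have hsplit : ∫ t in a..b, g t = (∫ t in a..x, g t) + ∫ t in x..b, g t :=
    (integral_add_adjacent_intervals ((hg.mono le_rfl hxb).intervalIntegrable hax)
      ((hg.mono hax le_rfl).intervalIntegrable hxb)).symm
  calc |(1 / 2) * ((x - a) * g a + (b - a) * g x + (b - x) * g b) - ∫ t in a..b, g t|
      = |((x - a) * (g a + g x) / 2 - ∫ t in a..x, g t)
          + ((b - x) * (g x + g b) / 2 - ∫ t in x..b, g t)| := by congr 1; rw [hsplit]; ring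
    _ ≤ (x - a) ^ 3 / 12 * supOn a b g'' + (b - x) ^ 3 / 12 * supOn a b g'' :=
        (abs_add_le _ _).trans (add_le_add hleft hright)
    _ = (((x - a) ^ 3 + (b - x) ^ 3) / 12) * supOn a b g'' := by ring

theorem stmt12 (a b : ℝ) (hab : a < b) (g g' g'' : ℝ → ℝ)
    (hg : IsC2On a b g g' g'') (x : ℝ) (hx : x ∈ Set.Icc a b) :
    |(1 / 2) * ((x - a) * g a + (b - a) * g x + (b - x) * g b) - ∫ t in a..b, g t| ≤
      (((x - a) ^ 3 + (b - x) ^ 3) / 12) * supOn a b g'' :=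
  stmt12_general a b g g' g'' hg x hx
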